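/- arXiv:2512.06231 — 2 statements merged into one kernel-verified Lean document; each statement's English description precedes it below -/
import Mathlib

section
/- Suppose f: ℝⁿ → ℝ is convex, differentiable, (ν, L_ν)-Hölder smooth with ν ∈ (0,1], attains its minimum on a nonempty set X⋆, and the iterates follow γ-scaled Polyak gradient descent with γ ∈ (0,2]. Then for any K ≥ 1: min_{1≤k≤K} ‖∇f(x^k)‖ ≤ (ν+1)^ν·L_ν·dist(x⁰, X⋆)^ν / (2^{ν/2}·γ^{ν/2}·ν^ν·K^{ν/2}). -/
open Set Metric Real intervalIntegral Filter Topology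
open scoped RealInnerProductSpace

variable {E : Type*} [NormedAddCommGroup E] [InnerProductSpace ℝ E] [CompleteSpace E]

lemma grad_cont {f : E → ℝ} {ν L : ℝ} (hν0 : 0 < ν)
    (hs : ∀ x y, ‖gradient f x - gradient f y‖ ≤ L * ‖x - y‖ ^ ν) :
    Continuous (gradient f) := by
  rw [continuous_iff_continuousAt]
  intro x₀
  rw [ContinuousAt, tendsto_iff_norm_sub_tendsto_zero]
  have h0 : Tendsto (fun x : E => ‖x - x₀‖) (𝓝 x₀) (𝓝 0) := by
    simpa using ((continuous_id.sub (continuous_const (y := x₀))).norm.tendsto x₀)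
  have h2 : ContinuousAt (fun r : ℝ => L * r ^ ν) 0 :=
    continuousAt_const.mul (Real.continuousAt_rpow_const 0 ν (Or.inr hν0.le))
  have h1 : Tendsto (fun x : E => L * ‖x - x₀‖ ^ ν) (𝓝 x₀) (𝓝 0) := by
    have := h2.tendsto.comp h0
    simpa [Function.comp_def, Real.zero_rpow hν0.ne'] using this
  exact squeeze_zero (fun x => norm_nonneg _) (fun x => hs x x₀) h1

lemma line_hasDerivAt {f : E → ℝ} (hdiff : Differentiable ℝ f) (x v : E) (t : ℝ) :
    HasDerivAt (fun s : ℝ => f (x + s • v)) ⟪gradient f (x + t • v), v⟫ t := by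
  have hc : HasDerivAt (fun s : ℝ => x + s • v) v t := by
    simpa using ((hasDerivAt_id t).smul_const v).const_add x
  have hf : HasFDerivAt f (InnerProductSpace.toDual ℝ E (gradient f (x + t • v))) (x + t • v) :=
    (hdiff (x + t • v)).hasGradientAt
  simpa [Function.comp_def] using hf.comp_hasDerivAt t hc

lemma convex_grad_ineq {f : E → ℝ} (hconv : ConvexOn ℝ Set.univ f)
    (hdiff : Differentiable ℝ f) (x y : E) :
    f x + ⟪gradient f x, y - x⟫ ≤ f y := by
  have hc1 : ConvexOn ℝ Set.univ (fun t : ℝ => f (x + t • (y - x))) := by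
    have := hconv.comp_affineMap (AffineMap.lineMap x y)
    have heq : ∀ t : ℝ, (f ∘ (AffineMap.lineMap x y)) t = f (x + t • (y - x)) := by
      intro t
      simp only [Function.comp_apply, AffineMap.lineMap_apply, vsub_eq_sub, vadd_eq_add]
      congr 1; abel
    simpa [Set.preimage_univ, funext heq] using this
  have hd := line_hasDerivAt hdiff x (y - x) 0
  have := hc1.le_slope_of_hasDerivAt (Set.mem_univ (0:ℝ)) (Set.mem_univ (1:ℝ)) one_pos hd
  rw [slope_def_field] at this
  simp only [zero_smul, add_zero, one_smul] at this hd
  have h1 : f (x + (y - x)) = f y := by congr 1; abel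
  rw [h1] at this
  have : ⟪gradient f x, y - x⟫ ≤ (f y - f x) / (1 - 0) := by
    simpa [div_eq_mul_inv] using this
  simp at this
  linarith

lemma descent {f : E → ℝ} (hdiff : Differentiable ℝ f) {ν L : ℝ} (hν0 : 0 < ν) (hL : 0 < L)
    (hs : ∀ x y, ‖gradient f x - gradient f y‖ ≤ L * ‖x - y‖ ^ ν) (x y : E) :
    f y ≤ f x + ⟪gradient f x, y - x⟫ + L / (ν + 1) * ‖y - x‖ ^ (ν + 1) := by
  rcases eq_or_ne y x with rfl | hxy
  · simp [Real.zero_rpow (by positivity : ν + 1 ≠ 0)]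
  set v := y - x with hv
  have hv0 : v ≠ 0 := sub_ne_zero.mpr hxy
  have hvn : 0 < ‖v‖ := norm_pos_iff.mpr hv0
  set d : ℝ → ℝ := fun t => ⟪gradient f (x + t • v), v⟫ with hd
  have hcontg : Continuous (gradient f) := grad_cont hν0 hs
  have hdc : Continuous d := by
    apply Continuous.inner
    · exact hcontg.comp (by continuity)
    · exact continuous_const
  have hint : ∫ t in (0:ℝ)..1, d t = f y - f x := by
    have := intervalIntegral.integral_eq_sub_of_hasDerivAt
      (f := fun s : ℝ => f (x + s • v)) (f' := d)
      (fun t _ => line_hasDerivAt hdiff x v t) (hdc.intervalIntegrable 0 1)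
    simpa [hv] using this
  -- pointwise bound
  have hpt : ∀ t ∈ Set.Icc (0:ℝ) 1, d t ≤ ⟪gradient f x, v⟫ + (L * ‖v‖ ^ (ν + 1)) * t ^ ν := by
    intro t ht
    have h1 : d t - ⟪gradient f x, v⟫ = ⟪gradient f (x + t • v) - gradient f x, v⟫ := by
      rw [inner_sub_left]
    have h2 : ⟪gradient f (x + t • v) - gradient f x, v⟫ ≤
        ‖gradient f (x + t • v) - gradient f x‖ * ‖v‖ := real_inner_le_norm _ _
    have h3 : ‖gradient f (x + t • v) - gradient f x‖ ≤ L * (t * ‖v‖) ^ ν := by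
      have := hs (x + t • v) x
      simpa [norm_smul, abs_of_nonneg ht.1] using this
    have h4 : L * (t * ‖v‖) ^ ν * ‖v‖ = (L * ‖v‖ ^ (ν + 1)) * t ^ ν := by
      rw [Real.mul_rpow ht.1 (norm_nonneg v), Real.rpow_add_one hvn.ne' ν]
      ring
    nlinarith [mul_le_mul_of_nonneg_right h3 (norm_nonneg v), h2]
  have hibound : ∫ t in (0:ℝ)..1, d t ≤
      ∫ t in (0:ℝ)..1, (⟪gradient f x, v⟫ + (L * ‖v‖ ^ (ν + 1)) * t ^ ν) := by
    apply intervalIntegral.integral_mono_on zero_le_one (hdc.intervalIntegrable 0 1)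
    · exact (_root_.intervalIntegrable_const).add
        ((intervalIntegrable_rpow' (by linarith)).const_mul _)
    · exact hpt
  have hival : ∫ t in (0:ℝ)..1, (⟪gradient f x, v⟫ + (L * ‖v‖ ^ (ν + 1)) * t ^ ν) =
      ⟪gradient f x, v⟫ + L / (ν + 1) * ‖v‖ ^ (ν + 1) := by
    rw [intervalIntegral.integral_add (_root_.intervalIntegrable_const)
      ((intervalIntegrable_rpow' (by linarith)).const_mul _),
      intervalIntegral.integral_const_mul, integral_rpow (Or.inl (by linarith)),
      intervalIntegral.integral_const]
    rw [Real.one_rpow, Real.zero_rpow (by positivity : ν + 1 ≠ 0)]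
    simp
    ring
  linarith [hint ▸ hibound, hival ▸ hibound]

lemma grad_shift {f : E → ℝ} (hdiff : Differentiable ℝ f) (a z : E) :
    HasGradientAt (fun w => f w - ⟪a, w⟫) (gradient f z - a) z := by
  have h1 : HasFDerivAt f (InnerProductSpace.toDual ℝ E (gradient f z)) z :=
    (hdiff z).hasGradientAt
  have h2 : HasFDerivAt (fun w : E => ⟪a, w⟫) (InnerProductSpace.toDual ℝ E a) z := by
    have : HasFDerivAt (fun w : E => ⟪a, w⟫) (innerSL ℝ a) z :=
      (innerSL ℝ a).hasFDerivAt
    convert this using 2 with w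
    ext w; simp
  have := h1.sub h2
  have heq : InnerProductSpace.toDual ℝ E (gradient f z) - InnerProductSpace.toDual ℝ E a
      = InnerProductSpace.toDual ℝ E (gradient f z - a) := by
    rw [map_sub]
  rw [heq] at this
  exact this

/-- Key interpolation inequality for convex functions with Hölder continuous gradient. -/
lemma key_ineq {f : E → ℝ} (hconv : ConvexOn ℝ Set.univ f) (hdiff : Differentiable ℝ f)
    {ν L : ℝ} (hν0 : 0 < ν) (hL : 0 < L)
    (hs : ∀ x y, ‖gradient f x - gradient f y‖ ≤ L * ‖x - y‖ ^ ν) (x y : E) :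
    f x + ⟪gradient f x, y - x⟫ +
      ν / ((ν + 1) * L ^ (1/ν)) * ‖gradient f y - gradient f x‖ ^ ((ν + 1)/ν) ≤ f y := by
  set g := gradient f with hg
  set φ : E → ℝ := fun w => f w - ⟪g x, w⟫ with hφ
  have hφgrad : ∀ z, gradient φ z = g z - g x := fun z => (grad_shift hdiff (g x) z).gradient
  have hφdiff : Differentiable ℝ φ := fun z => (grad_shift hdiff (g x) z).differentiableAt
  have hφconv : ConvexOn ℝ Set.univ φ := by
    apply hconv.sub
    refine ⟨convex_univ, ?_⟩
    intro u _ w _ p q hp hq hpq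
    simp only [inner_add_right, real_inner_smul_right, smul_eq_mul]
    apply le_of_eq; ring
  have hφs : ∀ u w, ‖gradient φ u - gradient φ w‖ ≤ L * ‖u - w‖ ^ ν := by
    intro u w; rw [hφgrad, hφgrad]
    simpa using hs u w
  have hφmin : ∀ z, φ x ≤ φ z := by
    intro z
    have := convex_grad_ineq hφconv hφdiff x z
    rw [hφgrad, sub_self] at this
    simpa using this
  set D := ‖g y - g x‖ with hD
  rcases eq_or_lt_of_le (norm_nonneg (g y - g x)) with hD0 | hD0
  · have : D = 0 := hD0.symm ▸ rfl
    rw [this, Real.zero_rpow (by positivity : (ν+1)/ν ≠ 0)]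
    simpa only [mul_zero, add_zero] using convex_grad_ineq hconv hdiff x y
  · -- D > 0
    set t : ℝ := (D / L) ^ (1/ν) with ht
    have htpos : 0 < t := Real.rpow_pos_of_pos (div_pos hD0 hL) _
    set z : E := y - (t / D) • (g y - g x) with hz
    have hzy : z - y = -((t / D) • (g y - g x)) := by rw [hz]; abel
    have hnorm : ‖z - y‖ = t := by
      rw [hzy, norm_neg, norm_smul, Real.norm_eq_abs, abs_of_pos (div_pos htpos hD0)]
      field_simp
    have hinner : ⟪gradient φ y, z - y⟫ = -(t * D) := by
      rw [hφgrad, hzy, inner_neg_right, real_inner_smul_right, real_inner_self_eq_norm_sq]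
      rw [← hD]
      field_simp
    have hdes := descent hφdiff hν0 hL hφs y z
    rw [hinner, hnorm] at hdes
    have hchain : φ x ≤ φ y + -(t * D) + L / (ν + 1) * t ^ (ν + 1) := le_trans (hφmin z) hdes
    -- compute t * D - L/(ν+1) * t^(ν+1) = c * D^((ν+1)/ν)
    have hν1 : (0:ℝ) < ν + 1 := by linarith
    have hcomp : t * D - L / (ν + 1) * t ^ (ν + 1)
        = ν / ((ν + 1) * L ^ (1/ν)) * D ^ ((ν + 1)/ν) := by
      have hLp : (0:ℝ) < L ^ (1/ν) := Real.rpow_pos_of_pos hL _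
      have h1 : t = D ^ (1/ν) / L ^ (1/ν) := by
        rw [ht, Real.div_rpow hD0.le hL.le]
      have h2 : t ^ (ν + 1) = D ^ ((ν+1)/ν) / L ^ ((ν+1)/ν) := by
        rw [ht, ← Real.rpow_mul (div_pos hD0 hL).le,
          show 1/ν * (ν+1) = (ν+1)/ν by field_simp, Real.div_rpow hD0.le hL.le]
      have h3 : L ^ ((ν+1)/ν) = L ^ (1/ν) * L := by
        rw [show (ν+1)/ν = 1/ν + 1 by field_simp; ring, Real.rpow_add hL, Real.rpow_one]
      have h4 : D ^ (1/ν) * D = D ^ ((ν+1)/ν) := by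
        rw [← Real.rpow_add_one hD0.ne' (1/ν), show 1/ν + 1 = (ν+1)/ν by field_simp; ring]
      have hLp' : L ^ (1/ν) ≠ 0 := hLp.ne'
      rw [h2, h3, h1]
      field_simp
      rw [← h4]
      ring
    have hiy : ⟪g x, y - x⟫ = ⟪g x, y⟫ - ⟪g x, x⟫ := inner_sub_right _ _ _
    have hφx : φ x = f x - ⟪g x, x⟫ := rfl
    have hφy : φ y = f y - ⟪g x, y⟫ := rfl
    linarith [hchain, hcomp]

lemma alg1 {G Δ I c A γ : ℝ} (hG : 0 < G) (hΔ0 : 0 ≤ Δ) (hc : 0 < c) (hA : 0 < A)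
    (h1 : c * A ≤ Δ) (h2 : Δ + c * A ≤ I) (hγ0 : 0 < γ) (hγ2 : γ ≤ 2) :
    2 * γ * c^2 * (A^2 / G^2) ≤ 2 * (γ * (Δ / G^2)) * I - (γ * (Δ / G^2))^2 * G^2 := by
  have hG2 : (0:ℝ) < G^2 := by positivity
  have e1 : 2 * (γ * (Δ / G^2)) * I - (γ * (Δ / G^2))^2 * G^2
      = (γ * Δ / G^2) * (2*I - γ*Δ) := by field_simp
  have e2 : 2*(c*A) ≤ 2*I - γ*Δ := by nlinarith [mul_le_mul_of_nonneg_right hγ2 hΔ0]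
  calc 2*γ*c^2*(A^2/G^2) = (γ*(c*A)/G^2) * (2*(c*A)) := by field_simp
    _ ≤ (γ*Δ/G^2) * (2*(c*A)) := by
        gcongr
    _ ≤ (γ*Δ/G^2) * (2*I - γ*Δ) := by
        apply mul_le_mul_of_nonneg_left e2 (by positivity)
    _ = 2 * (γ * (Δ / G^2)) * I - (γ * (Δ / G^2))^2 * G^2 := e1.symm

lemma rpow_helper {G ν : ℝ} (hG : 0 < G) (hν : 0 < ν) :
    (G ^ ((ν+1)/ν))^2 / G^2 = G ^ (2/ν) := by
  rw [← Real.rpow_natCast (G ^ ((ν+1)/ν)) 2, ← Real.rpow_mul hG.le,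
    ← Real.rpow_natCast G 2, ← Real.rpow_sub hG]
  congr 1
  push_cast
  field_simp
  ring

set_option maxHeartbeats 1000000 in
/-- Gradient-norm convergence of γ-scaled Polyak gradient descent (`γ ∈ (0,2]`) under
`(ν, L_ν)`-Hölder smoothness:
`min_{1≤k≤K} ‖∇f(x^k)‖ ≤ (ν+1)^ν L_ν dist(x⁰,X⋆)^ν / (2^{ν/2} γ^{ν/2} ν^ν K^{ν/2})`. -/
theorem polyak_gradient_norm_convergence
    (n : ℕ) (f : EuclideanSpace ℝ (Fin n) → ℝ)
    (hconv : ConvexOn ℝ Set.univ f) (hdiff : Differentiable ℝ f)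
    (ν L : ℝ) (hν0 : 0 < ν) (hν1 : ν ≤ 1) (hL : 0 < L)
    (hsmooth : ∀ x y, ‖gradient f x - gradient f y‖ ≤ L * ‖x - y‖ ^ ν)
    (fstar : ℝ) (X : Set (EuclideanSpace ℝ (Fin n)))
    (hX : X = {y | f y = fstar}) (hXne : X.Nonempty)
    (hlb : ∀ y, fstar ≤ f y)
    (γ : ℝ) (hγ0 : 0 < γ) (hγ2 : γ ≤ 2)
    (x : ℕ → EuclideanSpace ℝ (Fin n)) (K : ℕ) (hK : 1 ≤ K)
    (hgrad : ∀ k, k < K → gradient f (x k) ≠ 0)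
    (hupd : ∀ k, k < K → x (k + 1) = x k -
      (γ * ((f (x k) - fstar) / ‖gradient f (x k)‖ ^ 2)) • gradient f (x k)) :
    ∃ k, 1 ≤ k ∧ k ≤ K ∧
      ‖gradient f (x k)‖ ≤ (ν + 1) ^ ν * L * (Metric.infDist (x 0) X) ^ ν /
        ((2 : ℝ) ^ (ν / 2) * γ ^ (ν / 2) * ν ^ ν * (K : ℝ) ^ (ν / 2)) := by
  classical
  have hν1' : (0:ℝ) < ν + 1 := by linarith
  have hLp : (0:ℝ) < L ^ (1/ν) := Real.rpow_pos_of_pos hL _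
  set g := gradient f with hg
  set c : ℝ := ν / ((ν + 1) * L ^ (1/ν)) with hc
  set p : ℝ := (ν + 1)/ν with hp
  have hcpos : 0 < c := div_pos hν0 (mul_pos hν1' hLp)
  have hppos : 0 < p := div_pos hν1' hν0
  -- minimizer attaining the distance
  have hXclosed : IsClosed X := by
    rw [hX]; exact isClosed_eq hdiff.continuous continuous_const
  obtain ⟨xs, hxsX, hdist⟩ := hXclosed.exists_infDist_eq_dist hXne (x 0)
  have hfxs : f xs = fstar := by rw [hX] at hxsX; exact hxsX
  have hgs : g xs = 0 := by
    have hmin : IsLocalMin f xs := Filter.Eventually.of_forall (fun y => by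
      rw [hfxs]; exact hlb y)
    have h0 : fderiv ℝ f xs = 0 := hmin.fderiv_eq_zero
    rw [hg]
    simp [gradient, h0]
  have hkey : ∀ u v : EuclideanSpace ℝ (Fin n),
      f u + ⟪g u, v - u⟫ + c * ‖g v - g u‖ ^ p ≤ f v := by
    intro u v
    have := key_ineq hconv hdiff hν0 hL hsmooth u v
    rw [← hc, ← hp] at this
    exact this
  have hΔ : ∀ z, c * ‖g z‖ ^ p ≤ f z - fstar := by
    intro z
    have := hkey xs z
    rw [hgs, inner_zero_left, sub_zero, hfxs] at this
    linarith
  have hIn : ∀ z, (f z - fstar) + c * ‖g z‖ ^ p ≤ ⟪g z, z - xs⟫ := by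
    intro z
    have := hkey z xs
    rw [hfxs] at this
    have h1 : ⟪g z, xs - z⟫ = -⟪g z, z - xs⟫ := by
      rw [← inner_neg_right]; congr 1; abel
    have h2 : ‖g xs - g z‖ = ‖g z‖ := by rw [hgs, zero_sub, norm_neg]
    rw [h1, h2] at this
    linarith
  -- per-step decrease
  have hstep : ∀ k, k < K → ‖x (k+1) - xs‖^2 ≤
      ‖x k - xs‖^2 - 2*γ*c^2*‖g (x k)‖^(2/ν) := by
    intro k hk
    have hG : 0 < ‖g (x k)‖ := norm_pos_iff.mpr (hgrad k hk)
    have hΔ0 : 0 ≤ f (x k) - fstar := sub_nonneg.mpr (hlb _)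
    have hA : 0 < ‖g (x k)‖ ^ p := Real.rpow_pos_of_pos hG _
    set G := ‖g (x k)‖ with hGdef
    set Δ := f (x k) - fstar with hΔdef
    set s : ℝ := γ * (Δ / G^2) with hsdef
    have hs0 : 0 ≤ s := by positivity
    have hexp : ‖x (k+1) - xs‖^2 = ‖x k - xs‖^2 - 2 * s * ⟪g (x k), x k - xs⟫ + s^2 * G^2 := by
      rw [hupd k hk]
      have h3 : x k - s • g (x k) - xs = (x k - xs) - s • g (x k) := by abel
      rw [h3, norm_sub_sq_real, real_inner_smul_right, norm_smul, Real.norm_eq_abs]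
      rw [real_inner_comm]
      rw [mul_pow, sq_abs]
      ring
    have halg := alg1 (I := ⟪g (x k), x k - xs⟫) hG hΔ0 hcpos hA (hΔ (x k)) (hIn (x k)) hγ0 hγ2
    have hAG : (G^p)^2 / G^2 = G ^ (2/ν) := by rw [hp]; exact rpow_helper hG hν0
    rw [hAG, ← hsdef] at halg
    rw [hexp]
    linarith
  -- bound at the final iterate
  have hKb : ∀ N : ℝ, N = ‖x K - xs‖ → 2*γ*c^2 * ‖g (x K)‖^(2/ν) ≤ N^2 := by
    intro N hN
    rcases eq_or_lt_of_le (norm_nonneg (g (x K))) with hG0 | hG0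
    · rw [← hG0, Real.zero_rpow (by positivity : 2/ν ≠ 0), mul_zero]
      rw [hN]; positivity
    · set G := ‖g (x K)‖ with hGdef
      have hN0 : 0 ≤ N := hN ▸ norm_nonneg _
      have h1 : 2*(c * G ^ p) ≤ G * N := by
        have ha := hΔ (x K)
        have hb := hIn (x K)
        have hcs : ⟪g (x K), x K - xs⟫ ≤ G * N := by
          rw [hN]; exact real_inner_le_norm _ _
        linarith
      have h2 : (2*(c * G ^ p))^2 ≤ (G * N)^2 := by
        apply pow_le_pow_left₀ (by positivity) h1
      have hG2 : (0:ℝ) < G^2 := by positivity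
      have hAG : (G^p)^2 / G^2 = G ^ (2/ν) := by rw [hp]; exact rpow_helper hG0 hν0
      have h4 : 4*(c^2*((G^p)^2 / G^2)) ≤ N^2 := by
        rw [show 4*(c^2*((G^p)^2 / G^2)) = (4*c^2*(G^p)^2)/G^2 by ring, div_le_iff₀ hG2]
        nlinarith [h2]
      rw [hAG] at h4
      have h5 : (0:ℝ) ≤ c^2 * G^(2/ν) := by positivity
      nlinarith [mul_le_mul_of_nonneg_right hγ2 h5]
  -- argmin over [1, K]
  obtain ⟨k₀, hk₀mem, hk₀min⟩ := Finset.exists_min_image (Finset.Icc 1 K)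
    (fun k => ‖g (x k)‖) ⟨K, Finset.mem_Icc.mpr ⟨hK, le_refl K⟩⟩
  rw [Finset.mem_Icc] at hk₀mem
  set d : ℝ := Metric.infDist (x 0) X with hd
  have d0 : 0 ≤ d := Metric.infDist_nonneg
  set G0 := ‖g (x k₀)‖ with hG0def
  have hG0n : 0 ≤ G0 := norm_nonneg _
  set B : ℝ := 2*γ*c^2*G0^(2/ν) with hB
  have hBn : 0 ≤ B := by rw [hB]; positivity
  have hmono : ∀ k, 1 ≤ k → k ≤ K → B ≤ 2*γ*c^2*‖g (x k)‖^(2/ν) := by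
    intro k h1 h2
    have hle := hk₀min k (Finset.mem_Icc.mpr ⟨h1, h2⟩)
    have hr : G0^(2/ν) ≤ ‖g (x k)‖^(2/ν) :=
      Real.rpow_le_rpow hG0n hle (by positivity)
    have hcc : (0:ℝ) ≤ 2*γ*c^2 := by positivity
    rw [hB]; nlinarith
  set u : ℕ → ℝ := fun k => ‖x k - xs‖^2 with hu
  have htel : ∑ i ∈ Finset.range (K-1), (u (i+1) - u (i+2)) = u 1 - u K := by
    have h := Finset.sum_range_sub' (fun i => u (i+1)) (K-1)
    simpa [Nat.sub_add_cancel hK] using h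
  have hterm : ∀ i ∈ Finset.range (K-1), B ≤ u (i+1) - u (i+2) := by
    intro i hi
    rw [Finset.mem_range] at hi
    have hik : i + 1 < K := by omega
    have hst := hstep (i+1) hik
    have h2 := hmono (i+1) (by omega) (by omega)
    have he1 : u (i+1) = ‖x (i+1) - xs‖^2 := rfl
    have he2 : u (i+2) = ‖x (i+1+1) - xs‖^2 := rfl
    rw [he1, he2]
    linarith
  have hsum : ((K-1 : ℕ) : ℝ) * B ≤ u 1 - u K := by
    rw [← htel]
    calc ((K-1:ℕ):ℝ) * B = (Finset.range (K-1)).card • B := by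
          simp [nsmul_eq_mul]
      _ ≤ ∑ i ∈ Finset.range (K-1), (u (i+1) - u (i+2)) :=
          Finset.card_nsmul_le_sum _ _ _ hterm
  have huK : B ≤ u K := by
    have h1 := hKb ‖x K - xs‖ rfl
    have h2 := hmono K hK le_rfl
    have he : u K = ‖x K - xs‖^2 := rfl
    rw [he]; linarith
  have hu10 : u 1 ≤ u 0 := by
    have hst := hstep 0 (by omega)
    have h0 : (0:ℝ) ≤ 2*γ*c^2*‖g (x 0)‖^(2/ν) := by positivity
    have he1 : u 1 = ‖x (0+1) - xs‖^2 := rfl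
    have he2 : u 0 = ‖x 0 - xs‖^2 := rfl
    rw [he1, he2]; linarith
  have hu0 : u 0 = d^2 := by
    have : u 0 = ‖x 0 - xs‖^2 := rfl
    rw [this, hdist, dist_eq_norm]
  have hKB : (K:ℝ) * B ≤ d^2 := by
    have hcast : ((K-1:ℕ):ℝ) = (K:ℝ) - 1 := by
      have := Nat.cast_sub (R := ℝ) hK
      simpa using this
    rw [hcast] at hsum
    have := hu0 ▸ hu10
    linarith
  refine ⟨k₀, hk₀mem.1, hk₀mem.2, ?_⟩
  rw [← hG0def]
  have hKpos : (0:ℝ) < (K:ℝ) := by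
    have : 0 < K := by omega
    exact_mod_cast this
  have hdenpos : (0:ℝ) < (2:ℝ)^(ν/2) * γ^(ν/2) * ν^ν * (K:ℝ)^(ν/2) := by
    have := Real.rpow_pos_of_pos (show (0:ℝ) < 2 by norm_num) (ν/2)
    have := Real.rpow_pos_of_pos hγ0 (ν/2)
    have := Real.rpow_pos_of_pos hν0 ν
    have := Real.rpow_pos_of_pos hKpos (ν/2)
    positivity
  rcases eq_or_lt_of_le hG0n with h0 | hG0pos
  · rw [← h0]
    apply div_nonneg _ hdenpos.le
    have h1 : (0:ℝ) ≤ (ν+1)^ν := (Real.rpow_pos_of_pos hν1' ν).le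
    have h2 : (0:ℝ) ≤ d^ν := Real.rpow_nonneg d0 ν
    positivity
  · have hdenom : (0:ℝ) < 2*γ*c^2*(K:ℝ) := by positivity
    have h1 : G0^(2/ν) ≤ d^2 / (2*γ*c^2*(K:ℝ)) := by
      rw [le_div_iff₀ hdenom]
      calc G0^(2/ν) * (2*γ*c^2*(K:ℝ)) = (K:ℝ) * B := by rw [hB]; ring
        _ ≤ d^2 := hKB
    have h2 : G0 ≤ (d^2 / (2*γ*c^2*(K:ℝ)))^(ν/2) := by
      have e : (G0^(2/ν))^(ν/2) = G0 := by
        rw [← Real.rpow_mul hG0n, show 2/ν*(ν/2) = 1 by field_simp, Real.rpow_one]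
      rw [← e]
      exact Real.rpow_le_rpow (by positivity) h1 (by positivity)
    refine le_trans h2 (le_of_eq ?_)
    have e1 : (d^2 / (2*γ*c^2*(K:ℝ)))^(ν/2) = (d^2)^(ν/2) / (2*γ*c^2*(K:ℝ))^(ν/2) :=
      Real.div_rpow (by positivity) (by positivity) _
    have e2 : (d^2)^(ν/2) = d^ν := by
      rw [← Real.rpow_natCast d 2, ← Real.rpow_mul d0]
      congr 1; push_cast; ring
    have e3 : (2*γ*c^2*(K:ℝ))^(ν/2)
        = (2:ℝ)^(ν/2) * γ^(ν/2) * (c^2)^(ν/2) * (K:ℝ)^(ν/2) := by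
      rw [Real.mul_rpow (by positivity) (by positivity),
        Real.mul_rpow (by positivity) (by positivity),
        Real.mul_rpow (by positivity) (by positivity)]
    have e4 : (c^2)^(ν/2) = c^ν := by
      rw [← Real.rpow_natCast c 2, ← Real.rpow_mul hcpos.le]
      congr 1; push_cast; ring
    have e5 : c^ν = ν^ν / ((ν+1)^ν * L) := by
      rw [hc, Real.div_rpow hν0.le (by positivity),
        Real.mul_rpow hν1'.le hLp.le, ← Real.rpow_mul hL.le,
        show 1/ν*ν = 1 by field_simp, Real.rpow_one]
    rw [e1, e2, e3, e4, e5]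
    have n1 : (2:ℝ)^(ν/2) ≠ 0 := (Real.rpow_pos_of_pos (by norm_num) _).ne'
    have n2 : γ^(ν/2) ≠ 0 := (Real.rpow_pos_of_pos hγ0 _).ne'
    have n3 : ν^ν ≠ 0 := (Real.rpow_pos_of_pos hν0 _).ne'
    have n4 : (K:ℝ)^(ν/2) ≠ 0 := (Real.rpow_pos_of_pos hKpos _).ne'
    have n5 : (ν+1)^ν ≠ 0 := (Real.rpow_pos_of_pos hν1' _).ne'
    have n6 : L ≠ 0 := hL.ne'
    field_simp
end

section
/- Suppose f: ℝⁿ → ℝ is convex, differentiable, (ν, L_ν)-Hölder smooth with ν ∈ (0,1], and attains its minimum f⋆. If f additionally satisfies the (r, ρ_r)-Hölder growth condition with r > ν+1 on K = ∪_{x⋆∈X⋆} B(x⋆, ‖x⁰ − x⋆‖), then for any even K ≥ 2 the γ-scaled Polyak gradient descent iterates (γ ∈ (0,2)) satisfy min_{1≤k≤K} (f(x^k) − f⋆) ≤ C·L_ν^{r/(r−ν−1)}/(ρ_r^{(ν+1)/(r−ν−1)}·K^{r(ν+1)/(2(r−ν−1))}), where C = (r−ν−1)^{(ν+1)²/(2(ν+1−r))}·(γ(2−γ))^{r(ν+1)/(2(ν+1−r))}·ν^{νr/(ν+1−r)}/(2^{r(ν+1)/(2(ν+1−r))}·(ν+1)^{((ν+1)²+2νr)/(2(ν+1−r))}).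 -/
open Real InnerProductSpace

section PolyakAux
variable {F : Type*} [NormedAddCommGroup F] [InnerProductSpace ℝ F] [CompleteSpace F]

lemma rpow_helper_s15 {a : ℝ} (ha : 0 < a) (e1 e2 e3 : ℝ) (h : e1 + e2 = e3) :
    a ^ e1 * a ^ e2 = a ^ e3 := by rw [← Real.rpow_add ha, h]

lemma my_bern {p s : ℝ} (hp : 0 < p) (h0 : 0 ≤ s) (h1 : s < 1) :
    1 + p * s ≤ (1 - s) ^ (-p) := by
  have h1s : (0:ℝ) < 1 - s := by linarith
  rcases le_or_gt p 1 with hple | hpgt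
  · have hps : p * s ≤ s := by nlinarith
    have hps1 : (0:ℝ) < 1 - p * s := by nlinarith
    have hA : (1 - s) ^ p ≤ 1 - p * s := by
      have := rpow_one_add_le_one_add_mul_self (s := -s) (by linarith) hp.le hple
      simpa [mul_neg, ← sub_eq_add_neg] using this
    have hB : 1 + p * s ≤ 1 / (1 - p * s) := by
      rw [le_div_iff₀ hps1]; nlinarith [sq_nonneg (p*s)]
    have hC : 1 / (1 - p * s) ≤ 1 / (1 - s) ^ p := by
      apply one_div_le_one_div_of_le (Real.rpow_pos_of_pos h1s p) hA
    calc 1 + p * s ≤ 1 / (1 - p * s) := hB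
      _ ≤ 1 / (1 - s) ^ p := hC
      _ = (1 - s) ^ (-p) := by rw [Real.rpow_neg h1s.le, one_div]
  · have hA : 1 + p * s ≤ (1 + s) ^ p := by
      have := one_add_mul_self_le_rpow_one_add (s := s) (by linarith) hpgt.le
      simpa using this
    have hprod : (1 - s) ^ p * (1 + s) ^ p ≤ 1 := by
      rw [← Real.mul_rpow h1s.le (by linarith)]
      apply Real.rpow_le_one (by nlinarith) (by nlinarith) hp.le
    have hB : (1 + s) ^ p ≤ (1 - s) ^ (-p) := by
      rw [Real.rpow_neg h1s.le]
      rw [← one_div, le_div_iff₀ (Real.rpow_pos_of_pos h1s p), mul_comm]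
      exact hprod
    exact hA.trans hB

lemma my_seq {u : ℕ → ℝ} {c p : ℝ} (hc : 0 < c) (hp : 0 < p)
    (hnn : ∀ k, 0 ≤ u k) (hrec : ∀ k, u (k + 1) ≤ u k - c * u k ^ (1 + p)) :
    ∀ k, 1 ≤ k → u k ≤ (p * c * k) ^ (-1 / p) := by
  have hmono : ∀ k, u (k + 1) ≤ u k := by
    intro k
    have h1 := hrec k
    have h2 : 0 ≤ c * u k ^ (1 + p) :=
      mul_nonneg hc.le (Real.rpow_nonneg (hnn k) _)
    linarith
  have hanti : ∀ j k : ℕ, j ≤ k → u k ≤ u j := by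
    intro j k hjk
    induction k with
    | zero => simp_all
    | succ m ih =>
      rcases Nat.lt_or_ge j (m+1) with h | h
      · exact (hmono m).trans (ih (Nat.lt_succ_iff.mp h))
      · have : j = m + 1 := le_antisymm hjk h
        simp [this]
  intro k hk
  rcases eq_or_lt_of_le (hnn k) with h0 | hpos
  · exact h0 ▸ Real.rpow_nonneg (by positivity) _
  · -- u k > 0 ; all u j > 0 for j ≤ k
    have hposj : ∀ j ≤ k, 0 < u j := fun j hj => lt_of_lt_of_le hpos (hanti j k hj)
    have key : ∀ j ≤ k, p * c * j ≤ (u j) ^ (-p) := by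
      intro j hj
      induction j with
      | zero => simpa using Real.rpow_nonneg (hnn 0) (-p)
      | succ m ih =>
        have hm : m ≤ k := Nat.le_of_succ_le hj
        have hum : 0 < u m := hposj m hm
        have hum1 : 0 < u (m+1) := hposj (m+1) hj
        have ihm := ih hm
        set s : ℝ := c * u m ^ p with hs
        have hs0 : 0 < s := by positivity
        have hfac : u (m+1) ≤ u m * (1 - s) := by
          have h1 := hrec m
          have : u m ^ (1 + p) = u m * u m ^ p := by
            rw [Real.rpow_one_add' (hnn m) (by positivity)]
          rw [this] at h1
          calc u (m+1) ≤ u m - c * (u m * u m ^ p) := h1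
            _ = u m * (1 - s) := by rw [hs]; ring
        have hs1 : s < 1 := by
          by_contra hcon
          push_neg at hcon
          have : u m * (1 - s) ≤ 0 := mul_nonpos_of_nonneg_of_nonpos hum.le (by linarith)
          linarith [hfac, hum1]
        -- u(m+1)^(-p) ≥ (u m * (1-s))^(-p) = u m^(-p) * (1-s)^(-p) ≥ u m^(-p)(1+ps)
        have h1s : 0 < 1 - s := by linarith
        have hstep : (u m * (1 - s)) ^ (-p) ≤ u (m+1) ^ (-p) :=
          Real.rpow_le_rpow_of_nonpos (by positivity) hfac (by linarith)
        have hmul : (u m * (1 - s)) ^ (-p) = u m ^ (-p) * (1 - s) ^ (-p) :=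
          Real.mul_rpow hum.le h1s.le
        have hbern : 1 + p * s ≤ (1 - s) ^ (-p) := my_bern hp hs0.le hs1
        have hup : u m ^ (-p) * (1 + p * s) ≤ u m ^ (-p) * (1 - s) ^ (-p) := by
          apply mul_le_mul_of_nonneg_left hbern (Real.rpow_nonneg hum.le _)
        have hexp : u m ^ (-p) * (p * s) = p * c := by
          rw [hs]
          have : u m ^ (-p) * u m ^ p = 1 := by
            rw [← Real.rpow_add hum]; simp
          calc u m ^ (-p) * (p * (c * u m ^ p))
              = p * c * (u m ^ (-p) * u m ^ p) := by ring
            _ = p * c := by rw [this]; ring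
        have : p * c * m + p * c ≤ u (m+1) ^ (-p) := by
          calc p * c * m + p * c ≤ u m ^ (-p) + u m ^ (-p) * (p * s) := by
                rw [hexp]; linarith
            _ = u m ^ (-p) * (1 + p * s) := by ring
            _ ≤ u m ^ (-p) * (1 - s) ^ (-p) := hup
            _ = (u m * (1 - s)) ^ (-p) := hmul.symm
            _ ≤ u (m+1) ^ (-p) := hstep
        push_cast
        linarith [this]
    have hkpos : (0:ℝ) < p * c * k := by
      have : (1:ℝ) ≤ (k:ℝ) := by exact_mod_cast hk
      positivity
    have hkey := key k le_rfl
    -- u k = (u k ^ (-p)) ^ (-1/p) ≥ ... antitone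
    have h2 : (u k ^ (-p)) ^ (-1/p) ≤ (p * c * k) ^ (-1/p) :=
      Real.rpow_le_rpow_of_nonpos hkpos hkey
        (by rw [neg_div]; exact neg_nonpos.2 (by positivity))
    have h3 : (u k ^ (-p)) ^ (-1/p) = u k := by
      rw [← Real.rpow_mul (hnn k), show (-p) * (-1/p) = 1 by field_simp, Real.rpow_one]
    rw [← h3]; exact h2

lemma my_line_deriv (f : F → ℝ) (hdiff : Differentiable ℝ f) (z v : F) (t : ℝ) :
    HasDerivAt (fun s : ℝ => f (z + s • v)) ⟪gradient f (z + t • v), v⟫_ℝ t := by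
  have hline : HasDerivAt (fun s : ℝ => z + s • v) v t := by
    simpa using ((hasDerivAt_id t).smul_const v).const_add z
  have hf : HasFDerivAt f (toDual ℝ F (gradient f (z + t • v))) (z + t • v) :=
    hasGradientAt_iff_hasFDerivAt.mp (hdiff (z + t • v)).hasGradientAt
  simpa [Function.comp_def] using hf.comp_hasDerivAt t hline

lemma my_grad_cont (f : F → ℝ) {L ν : ℝ} (hL : 0 < L) (hν : 0 < ν)
    (hsmooth : ∀ x y, ‖gradient f x - gradient f y‖ ≤ L * ‖x - y‖ ^ ν) :
    Continuous fun z => gradient f z := by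
  rw [Metric.continuous_iff]
  intro b ε hε
  refine ⟨(ε / L) ^ ν⁻¹, Real.rpow_pos_of_pos (by positivity) _, fun a ha => ?_⟩
  have h1 : ‖gradient f a - gradient f b‖ ≤ L * ‖a - b‖ ^ ν := hsmooth a b
  have h2 : ‖a - b‖ ^ ν < ((ε / L) ^ ν⁻¹) ^ ν := by
    apply Real.rpow_lt_rpow (norm_nonneg _) _ hν
    simpa [dist_eq_norm] using ha
  have h3 : ((ε / L) ^ ν⁻¹) ^ ν = ε / L := Real.rpow_inv_rpow (by positivity) hν.ne'
  rw [dist_eq_norm]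
  calc ‖gradient f a - gradient f b‖ ≤ L * ‖a - b‖ ^ ν := h1
    _ < L * (ε / L) := by
        rw [← h3]
        exact (mul_lt_mul_iff_right₀ hL).2 (by
          apply Real.rpow_lt_rpow (norm_nonneg _) _ hν
          simpa [dist_eq_norm] using ha)
    _ = ε := by field_simp

lemma my_descent (f : F → ℝ) (hdiff : Differentiable ℝ f) {L ν : ℝ} (hL : 0 < L) (hν : 0 < ν)
    (hsmooth : ∀ x y, ‖gradient f x - gradient f y‖ ≤ L * ‖x - y‖ ^ ν) (z y : F) :
    f y ≤ f z + ⟪gradient f z, y - z⟫_ℝ + L / (ν + 1) * ‖y - z‖ ^ (ν + 1) := by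
  rcases eq_or_ne y z with rfl | hyz
  · simp [Real.zero_rpow (by positivity : ν + 1 ≠ 0)]
  set v := y - z with hv
  have hvne : v ≠ 0 := sub_ne_zero.2 hyz
  have hvpos : 0 < ‖v‖ := norm_pos_iff.2 hvne
  have hderiv : ∀ t ∈ Set.uIcc (0:ℝ) 1,
      HasDerivAt (fun s : ℝ => f (z + s • v)) ⟪gradient f (z + t • v), v⟫_ℝ t :=
    fun t _ => my_line_deriv f hdiff z v t
  have hcont : Continuous fun t : ℝ => ⟪gradient f (z + t • v), v⟫_ℝ := by
    apply Continuous.inner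
    · exact (my_grad_cont f hL hν hsmooth).comp (by continuity)
    · exact continuous_const
  have hint : ∫ t in (0:ℝ)..1, ⟪gradient f (z + t • v), v⟫_ℝ
      = f (z + (1:ℝ) • v) - f (z + (0:ℝ) • v) := by
    exact intervalIntegral.integral_eq_sub_of_hasDerivAt hderiv
      (hcont.intervalIntegrable 0 1)
  have hbound : ∀ t ∈ Set.Icc (0:ℝ) 1,
      ⟪gradient f (z + t • v), v⟫_ℝ ≤ ⟪gradient f z, v⟫_ℝ + L * t ^ ν * ‖v‖ ^ (ν + 1) := by
    intro t ht
    have h1 : ⟪gradient f (z + t • v) - gradient f z, v⟫_ℝ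
        ≤ ‖gradient f (z + t • v) - gradient f z‖ * ‖v‖ := real_inner_le_norm _ _
    have h2 : ‖gradient f (z + t • v) - gradient f z‖ ≤ L * ‖t • v‖ ^ ν := by
      simpa using hsmooth (z + t • v) z
    have h3 : ‖t • v‖ ^ ν = t ^ ν * ‖v‖ ^ ν := by
      rw [norm_smul, Real.norm_eq_abs, abs_of_nonneg ht.1, Real.mul_rpow ht.1 (norm_nonneg _)]
    have h4 : ‖v‖ ^ ν * ‖v‖ = ‖v‖ ^ (ν + 1) := by
      rw [Real.rpow_add hvpos, Real.rpow_one]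
    have h5 : ⟪gradient f (z + t • v), v⟫_ℝ - ⟪gradient f z, v⟫_ℝ ≤ L * t ^ ν * ‖v‖ ^ (ν + 1) := by
      calc ⟪gradient f (z + t • v), v⟫_ℝ - ⟪gradient f z, v⟫_ℝ
          = ⟪gradient f (z + t • v) - gradient f z, v⟫_ℝ := by rw [inner_sub_left]
        _ ≤ ‖gradient f (z + t • v) - gradient f z‖ * ‖v‖ := h1
        _ ≤ L * ‖t • v‖ ^ ν * ‖v‖ := by
            apply mul_le_mul_of_nonneg_right h2 (norm_nonneg _)
        _ = L * t ^ ν * (‖v‖ ^ ν * ‖v‖) := by rw [h3]; ring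
        _ = L * t ^ ν * ‖v‖ ^ (ν + 1) := by rw [h4]
    linarith
  have hintle : ∫ t in (0:ℝ)..1, ⟪gradient f (z + t • v), v⟫_ℝ
      ≤ ∫ t in (0:ℝ)..1, (⟪gradient f z, v⟫_ℝ + L * t ^ ν * ‖v‖ ^ (ν + 1)) := by
    apply intervalIntegral.integral_mono_on zero_le_one
      (hcont.intervalIntegrable 0 1)
    · apply IntervalIntegrable.add (intervalIntegrable_const)
      have : IntervalIntegrable (fun t : ℝ => t ^ ν) MeasureTheory.volume 0 1 :=
        intervalIntegral.intervalIntegrable_rpow' (by linarith)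
      simpa [mul_comm, mul_assoc, mul_left_comm] using
        (this.const_mul L).mul_const (‖v‖ ^ (ν + 1))
    · exact hbound
  have hrhs : ∫ t in (0:ℝ)..1, (⟪gradient f z, v⟫_ℝ + L * t ^ ν * ‖v‖ ^ (ν + 1))
      = ⟪gradient f z, v⟫_ℝ + L / (ν + 1) * ‖v‖ ^ (ν + 1) := by
    rw [intervalIntegral.integral_add intervalIntegrable_const]
    · rw [intervalIntegral.integral_const]
      have : ∫ t in (0:ℝ)..1, L * t ^ ν * ‖v‖ ^ (ν + 1)
          = L * ‖v‖ ^ (ν + 1) * ∫ t in (0:ℝ)..1, t ^ ν := by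
        rw [← intervalIntegral.integral_const_mul]
        congr 1; ext t; ring
      rw [this, integral_rpow (Or.inl (by linarith))]
      simp [Real.one_rpow, Real.zero_rpow (by positivity : ν + 1 ≠ 0)]
      ring
    · have : IntervalIntegrable (fun t : ℝ => t ^ ν) MeasureTheory.volume 0 1 :=
        intervalIntegral.intervalIntegrable_rpow' (by linarith)
      simpa [mul_comm, mul_assoc, mul_left_comm] using
        (this.const_mul L).mul_const (‖v‖ ^ (ν + 1))
  have hfy : f (z + (1:ℝ) • v) = f y := by rw [hv]; norm_num
  have hfz : f (z + (0:ℝ) • v) = f z := by norm_num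
  rw [hfy, hfz] at hint
  linarith [hint ▸ hintle, hrhs ▸ hintle]

lemma my_convex_lb (f : F → ℝ) (hconv : ConvexOn ℝ Set.univ f)
    (hdiff : Differentiable ℝ f) (z w : F) :
    ⟪gradient f z, w - z⟫_ℝ ≤ f w - f z := by
  set v := w - z with hv
  have hd : HasDerivAt (fun s : ℝ => f (z + s • v)) ⟪gradient f (z + (0:ℝ) • v), v⟫_ℝ 0 :=
    my_line_deriv f hdiff z v 0
  rw [show z + (0:ℝ) • v = z by simp] at hd
  have hslope : Filter.Tendsto (slope (fun s : ℝ => f (z + s • v)) 0)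
      (nhdsWithin 0 (Set.Ioi 0)) (nhds ⟪gradient f z, v⟫_ℝ) :=
    (hasDerivAt_iff_tendsto_slope.mp hd).mono_left
      (nhdsWithin_mono 0 (fun t ht => Set.mem_compl_singleton_iff.2 (ne_of_gt ht)))
  have hev : ∀ᶠ t in nhdsWithin 0 (Set.Ioi 0),
      slope (fun s : ℝ => f (z + s • v)) 0 t ≤ f w - f z := by
    filter_upwards [Ioc_mem_nhdsGT_of_mem (Set.left_mem_Ico.2 zero_lt_one)] with t ht
    have ht0 : 0 < t := ht.1
    have ht1 : t ≤ 1 := ht.2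
    have hzv : z + t • v = (1 - t) • z + t • w := by rw [hv]; module
    have hcomb : f (z + t • v) ≤ (1 - t) * f z + t * f w := by
      rw [hzv]
      exact hconv.2 (Set.mem_univ z) (Set.mem_univ w) (by linarith) ht0.le (by ring)
    have hsl : slope (fun s : ℝ => f (z + s • v)) 0 t = (f (z + t • v) - f z) / t := by
      rw [slope_def_field]
      simp
    rw [hsl, div_le_iff₀ ht0]
    nlinarith [hcomb]
  exact le_of_tendsto hslope hev

lemma my_grad_bound (f : F → ℝ) (hdiff : Differentiable ℝ f) {L ν : ℝ} (hL : 0 < L) (hν : 0 < ν)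
    (hsmooth : ∀ x y, ‖gradient f x - gradient f y‖ ≤ L * ‖x - y‖ ^ ν)
    {fstar : ℝ} (hlb : ∀ y, fstar ≤ f y) (z : F) :
    ‖gradient f z‖ ^ ((ν + 1) / ν) ≤ (ν + 1) / ν * L ^ (1 / ν) * (f z - fstar) := by
  have hν1 : (0:ℝ) < ν + 1 := by linarith
  have hνne : ν ≠ 0 := hν.ne'
  have hν1ne : ν + 1 ≠ 0 := hν1.ne'
  set g := gradient f z with hg
  rcases eq_or_ne g 0 with h0 | hne
  · rw [h0]
    have h1 : fstar ≤ f z := hlb z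
    have : (0:ℝ) ^ ((ν + 1) / ν) = 0 := Real.zero_rpow (by positivity)
    rw [norm_zero, this]
    exact mul_nonneg (by positivity) (by linarith)
  · have hgpos : 0 < ‖g‖ := norm_pos_iff.2 hne
    set t : ℝ := L ^ (-(1 / ν)) * ‖g‖ ^ ((1 - ν) / ν) with ht
    have htpos : 0 < t := by positivity
    have hdesc := my_descent f hdiff hL hν hsmooth z (z - t • g)
    rw [← hg] at hdesc
    have h1 : z - t • g - z = -(t • g) := by abel
    rw [h1] at hdesc
    have hinner : ⟪g, -(t • g)⟫_ℝ = -(t * ‖g‖ ^ 2) := by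
      rw [inner_neg_right, real_inner_smul_right, real_inner_self_eq_norm_sq]
    have hnorm : ‖-(t • g)‖ = t * ‖g‖ := by
      rw [norm_neg, norm_smul, Real.norm_eq_abs, abs_of_pos htpos]
    rw [hinner, hnorm] at hdesc
    have E1 : t * ‖g‖ ^ 2 = L ^ (-(1 / ν)) * ‖g‖ ^ ((ν + 1) / ν) := by
      rw [ht, mul_assoc]
      congr 1
      rw [← Real.rpow_natCast ‖g‖ 2]
      exact rpow_helper_s15 hgpos _ _ _ (by field_simp; try ring)
    have E2 : L / (ν + 1) * (t * ‖g‖) ^ (ν + 1)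
        = 1 / (ν + 1) * (L ^ (-(1 / ν)) * ‖g‖ ^ ((ν + 1) / ν)) := by
      rw [ht, Real.mul_rpow (by positivity) (norm_nonneg g),
        Real.mul_rpow (by positivity) (by positivity),
        ← Real.rpow_mul hL.le, ← Real.rpow_mul (norm_nonneg g)]
      have hLpow : L / (ν + 1) * L ^ (-(1 / ν) * (ν + 1)) = 1 / (ν + 1) * L ^ (-(1 / ν)) := by
        have : L = L ^ (1:ℝ) := (Real.rpow_one L).symm
        calc L / (ν + 1) * L ^ (-(1 / ν) * (ν + 1))
            = 1 / (ν + 1) * (L ^ (1:ℝ) * L ^ (-(1 / ν) * (ν + 1))) := by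
              rw [← this]; ring
          _ = 1 / (ν + 1) * L ^ (-(1 / ν)) := by
              rw [rpow_helper_s15 hL 1 (-(1 / ν) * (ν + 1)) (-(1 / ν)) (by field_simp; try ring)]
      have hgpow : ‖g‖ ^ ((1 - ν) / ν * (ν + 1)) * ‖g‖ ^ (ν + 1) = ‖g‖ ^ ((ν + 1) / ν) :=
        rpow_helper_s15 hgpos _ _ _ (by field_simp; try ring)
      calc L / (ν + 1) * (L ^ (-(1 / ν) * (ν + 1)) * ‖g‖ ^ ((1 - ν) / ν * (ν + 1)) * ‖g‖ ^ (ν + 1))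
          = (L / (ν + 1) * L ^ (-(1 / ν) * (ν + 1))) *
            (‖g‖ ^ ((1 - ν) / ν * (ν + 1)) * ‖g‖ ^ (ν + 1)) := by ring
        _ = 1 / (ν + 1) * L ^ (-(1 / ν)) * ‖g‖ ^ ((ν + 1) / ν) := by
            rw [hLpow, hgpow]
        _ = 1 / (ν + 1) * (L ^ (-(1 / ν)) * ‖g‖ ^ ((ν + 1) / ν)) := by ring
    rw [E1, E2] at hdesc
    have hfy : fstar ≤ f (z - t • g) := hlb _
    -- fstar ≤ f z - ν/(ν+1) * L^(-(1/ν)) * G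
    set G := ‖g‖ ^ ((ν + 1) / ν) with hG
    have hkey : ν / (ν + 1) * (L ^ (-(1 / ν)) * G) ≤ f z - fstar := by
      have : f (z - t • g) ≤ f z + -(L ^ (-(1 / ν)) * G) + 1 / (ν + 1) * (L ^ (-(1 / ν)) * G) :=
        hdesc
      have h2 : ν / (ν + 1) * (L ^ (-(1 / ν)) * G)
          = (L ^ (-(1 / ν)) * G) - 1 / (ν + 1) * (L ^ (-(1 / ν)) * G) := by
        field_simp; ring
      rw [h2]
      linarith
    have hLL : L ^ (1 / ν) * L ^ (-(1 / ν)) = 1 := by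
      rw [rpow_helper_s15 hL (1/ν) (-(1/ν)) 0 (by ring), Real.rpow_zero]
    calc G = 1 * 1 * G := by ring
      _ = ((ν + 1) / ν * (ν / (ν + 1))) * (L ^ (1 / ν) * L ^ (-(1 / ν))) * G := by
          rw [hLL, show (ν + 1) / ν * (ν / (ν + 1)) = 1 from by field_simp]
      _ = (ν + 1) / ν * L ^ (1 / ν) * (ν / (ν + 1) * (L ^ (-(1 / ν)) * G)) := by ring
      _ ≤ (ν + 1) / ν * L ^ (1 / ν) * (f z - fstar) := by
          apply mul_le_mul_of_nonneg_left hkey (by positivity)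

lemma my_grad_zero (f : F → ℝ) {fstar : ℝ} (hlb : ∀ y, fstar ≤ f y) {z : F}
    (hz : f z = fstar) : gradient f z = 0 := by
  have hmin : IsLocalMin f z := Filter.Eventually.of_forall (fun y => hz ▸ hlb y)
  have := hmin.fderiv_eq_zero
  simp [gradient, this]

end PolyakAux

set_option maxHeartbeats 2000000

/-- Sublinear convergence of γ-scaled Polyak gradient descent (`γ ∈ (0,2)`) under
`(ν, L_ν)`-Hölder smoothness and `(r, ρ_r)`-Hölder growth with `r > ν + 1` on
`K = ∪_{x⋆∈X⋆} B(x⋆, ‖x⁰ − x⋆‖)`, for even iteration counts `K ≥ 2`. -/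
theorem polyak_holder_growth_convergence
    (n : ℕ) (f : EuclideanSpace ℝ (Fin n) → ℝ)
    (hconv : ConvexOn ℝ Set.univ f) (hdiff : Differentiable ℝ f)
    (ν L ρ r : ℝ) (hν0 : 0 < ν) (hν1 : ν ≤ 1) (hL : 0 < L) (hρ : 0 < ρ)
    (hr : r > ν + 1)
    (hsmooth : ∀ x y, ‖gradient f x - gradient f y‖ ≤ L * ‖x - y‖ ^ ν)
    (fstar : ℝ) (X : Set (EuclideanSpace ℝ (Fin n)))
    (hX : X = {y | f y = fstar}) (hXne : X.Nonempty)
    (hlb : ∀ y, fstar ≤ f y)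
    (γ : ℝ) (hγ0 : 0 < γ) (hγ2 : γ < 2)
    (x : ℕ → EuclideanSpace ℝ (Fin n))
    (hgrowth : ∀ z ∈ ⋃ xs ∈ X, Metric.closedBall xs ‖x 0 - xs‖,
      f z - fstar ≥ ρ * (Metric.infDist z X) ^ r)
    (hgrad : ∀ k, gradient f (x k) ≠ 0)
    (hupd : ∀ k, x (k + 1) = x k -
      (γ * ((f (x k) - fstar) / ‖gradient f (x k)‖ ^ 2)) • gradient f (x k))
    (K : ℕ) (hK : 2 ≤ K) (hKeven : Even K) :
    ∃ k, 1 ≤ k ∧ k ≤ K ∧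
      f (x k) - fstar ≤
        ((r - ν - 1) ^ ((ν + 1) ^ 2 / (2 * (ν + 1 - r))) *
          (γ * (2 - γ)) ^ (r * (ν + 1) / (2 * (ν + 1 - r))) *
          ν ^ (ν * r / (ν + 1 - r)) /
          ((2 : ℝ) ^ (r * (ν + 1) / (2 * (ν + 1 - r))) *
            (ν + 1) ^ (((ν + 1) ^ 2 + 2 * ν * r) / (2 * (ν + 1 - r))))) *
        (L ^ (r / (r - ν - 1)) /
          (ρ ^ ((ν + 1) / (r - ν - 1)) * (K : ℝ) ^ (r * (ν + 1) / (2 * (r - ν - 1))))) := by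
  -- basic positivity
  have hν1p : (0:ℝ) < ν + 1 := by linarith
  have hνne : ν ≠ 0 := hν0.ne'
  have hν1ne : ν + 1 ≠ 0 := hν1p.ne'
  have hγγ : 0 < γ * (2 - γ) := mul_pos hγ0 (by linarith)
  have hrp : (0:ℝ) < r := by linarith
  have hrν : (0:ℝ) < r - ν - 1 := by linarith
  -- notation
  set δ : ℕ → ℝ := fun k => f (x k) - fstar with hδ
  set g : ℕ → EuclideanSpace ℝ (Fin n) := fun k => gradient f (x k) with hgdef
  set d : ℕ → ℝ := fun k => Metric.infDist (x k) X with hd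
  have hδnn : ∀ k, 0 ≤ δ k := fun k => by simp [hδ]; linarith [hlb (x k)]
  have hδpos : ∀ k, 0 < δ k := by
    intro k
    rcases eq_or_lt_of_le (hδnn k) with h0 | h; swap
    · exact h
    · exfalso
      apply hgrad k
      apply my_grad_zero f hlb
      simp [hδ] at h0
      linarith [h0]
  have hgpos : ∀ k, (0:ℝ) < ‖g k‖ := fun k => norm_pos_iff.2 (hgrad k)
  have hXclosed : IsClosed X := by
    rw [hX]
    exact isClosed_eq (hdiff.continuous) continuous_const
  -- constants
  set q : ℝ := 2 * ν / (ν + 1) with hq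
  set M : ℝ := ((ν + 1) / ν) ^ q * L ^ (2 / (ν + 1)) with hM
  have hMpos : 0 < M := by positivity
  set c : ℝ := γ * (2 - γ) / M with hc
  have hcpos : 0 < c := by positivity
  set cc : ℝ := c * ρ ^ (2 / (ν + 1)) with hcc
  have hccpos : 0 < cc := by positivity
  set p : ℝ := (r - ν - 1) / (ν + 1) with hp
  have hppos : 0 < p := by positivity
  -- Fejér step inequality
  have step : ∀ k, ∀ xs ∈ X, ‖x (k+1) - xs‖^2
      ≤ ‖x k - xs‖^2 - γ * (2 - γ) * (δ k)^2 / ‖g k‖^2 := by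
    intro k xs hxs
    have hfxs : f xs = fstar := by rw [hX] at hxs; exact hxs
    set lam : ℝ := γ * (δ k / ‖g k‖^2) with hlam
    have hgk := hgpos k
    have hδk := hδpos k
    have hlampos : 0 < lam := by positivity
    have hupdk : x (k+1) - xs = (x k - xs) - lam • g k := by
      rw [hupd k]; abel
    have hexp : ‖x (k+1) - xs‖^2
        = ‖x k - xs‖^2 - 2 * lam * ⟪x k - xs, g k⟫_ℝ + lam^2 * ‖g k‖^2 := by
      rw [hupdk, norm_sub_sq_real, real_inner_smul_right, norm_smul]
      simp only [Real.norm_eq_abs, mul_pow, sq_abs]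
      ring
    have hinner : δ k ≤ ⟪x k - xs, g k⟫_ℝ := by
      have h1 := my_convex_lb f hconv hdiff (x k) xs
      rw [hfxs] at h1
      have h2 : ⟪gradient f (x k), xs - x k⟫_ℝ = - ⟪x k - xs, g k⟫_ℝ := by
        rw [show xs - x k = -(x k - xs) by abel, inner_neg_right, real_inner_comm]
      rw [h2] at h1
      have h3 : δ k = f (x k) - fstar := rfl
      linarith
    have hiden : 2*lam*(δ k) - lam^2*‖g k‖^2 = γ*(2-γ)*(δ k)^2/‖g k‖^2 := by
      rw [hlam]
      have hgne : ‖g k‖^2 ≠ 0 := by positivity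
      field_simp
    have hmono : 2*lam*(δ k) ≤ 2*lam*⟪x k - xs, g k⟫_ℝ := by
      apply mul_le_mul_of_nonneg_left hinner (by positivity)
    rw [hexp, ← hiden]
    linarith [hmono]
  -- iterates stay in balls
  have ball : ∀ k, ∀ xs ∈ X, ‖x k - xs‖ ≤ ‖x 0 - xs‖ := by
    intro k
    induction k with
    | zero => exact fun xs _ => le_refl _
    | succ m ih =>
      intro xs hxs
      have h1 := step m xs hxs
      have h2 : (0:ℝ) < γ * (2 - γ) * (δ m)^2 / ‖g m‖^2 := by
        have := hδpos m; have := hgpos m; positivity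
      have h3 : ‖x (m+1) - xs‖^2 ≤ ‖x m - xs‖^2 := by linarith
      have h4 : ‖x (m+1) - xs‖ ≤ ‖x m - xs‖ :=
        (pow_le_pow_iff_left₀ (norm_nonneg _) (norm_nonneg _) two_ne_zero).mp h3
      exact h4.trans (ih xs hxs)
  -- growth at iterates
  have growth' : ∀ k, ρ * (d k) ^ r ≤ δ k := by
    intro k
    obtain ⟨xs, hxs⟩ := hXne
    have hmem : x k ∈ ⋃ xs ∈ X, Metric.closedBall xs ‖x 0 - xs‖ := by
      apply Set.mem_biUnion hxs
      rw [Metric.mem_closedBall, dist_eq_norm]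
      exact ball k xs hxs
    exact hgrowth (x k) hmem
  have hdnn : ∀ k, 0 ≤ d k := fun k => Metric.infDist_nonneg
  -- distance-squared recursion
  have udrop : ∀ k, (d (k+1))^2 ≤ (d k)^2 - γ * (2 - γ) * (δ k)^2 / ‖g k‖^2 := by
    intro k
    obtain ⟨xs, hxs, hdist⟩ := hXclosed.exists_infDist_eq_dist hXne (x k)
    have h1 : d (k+1) ≤ ‖x (k+1) - xs‖ := by
      rw [← dist_eq_norm]
      exact Metric.infDist_le_dist_of_mem hxs
    have h2 : (d (k+1))^2 ≤ ‖x (k+1) - xs‖^2 := by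
      apply pow_le_pow_left₀ (hdnn (k+1)) h1
    have h3 : (d k)^2 = ‖x k - xs‖^2 := by
      rw [hd]; simp only []; rw [hdist, dist_eq_norm]
    rw [h3]
    exact h2.trans (step k xs hxs)
  -- gradient bound squared
  have gradsq : ∀ k, ‖g k‖^2 ≤ M * (δ k) ^ q := by
    intro k
    have hb := my_grad_bound f hdiff hL hν0 hsmooth hlb (x k)
    have hq0 : 0 ≤ q := by positivity
    have hraise := Real.rpow_le_rpow (Real.rpow_nonneg (norm_nonneg _) _) hb hq0
    have hlhs : (‖g k‖ ^ ((ν + 1) / ν)) ^ q = ‖g k‖^2 := by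
      rw [← Real.rpow_mul (norm_nonneg _), show (ν + 1) / ν * q = ((2:ℕ):ℝ) by
        rw [hq]; push_cast; field_simp; try ring]
      exact Real.rpow_natCast _ 2
    have hrhs : ((ν + 1) / ν * L ^ (1 / ν) * (f (x k) - fstar)) ^ q = M * (δ k) ^ q := by
      rw [Real.mul_rpow (by positivity) (hδnn k), Real.mul_rpow (by positivity) (by positivity),
        ← Real.rpow_mul hL.le, show 1 / ν * q = 2 / (ν + 1) by rw [hq]; field_simp; try ring, hM]
    rw [hlhs, hrhs] at hraise
    exact hraise
  -- master inequality 1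
  have master1 : ∀ k, c * (δ k) ^ (2 / (ν + 1))
      ≤ γ * (2 - γ) * (δ k)^2 / ‖g k‖^2 := by
    intro k
    have hδk := hδpos k
    have hgk := hgpos k
    have hδq : 0 < (δ k) ^ q := Real.rpow_pos_of_pos hδk _
    have h1 : γ * (2 - γ) * (δ k)^2 / (M * (δ k) ^ q) ≤ γ * (2 - γ) * (δ k)^2 / ‖g k‖^2 := by
      apply div_le_div_of_nonneg_left (by positivity) (pow_pos hgk 2) (gradsq k)
    have h2 : c * (δ k) ^ (2 / (ν + 1)) = γ * (2 - γ) * (δ k)^2 / (M * (δ k) ^ q) := by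
      have hsplit : (δ k)^2 = (δ k) ^ (2 / (ν + 1)) * (δ k) ^ q := by
        rw [rpow_helper_s15 hδk (2 / (ν + 1)) q ((2:ℕ):ℝ) (by rw [hq]; push_cast; field_simp; ring)]
        exact (Real.rpow_natCast _ 2).symm
      rw [hsplit, hc]
      field_simp
    rw [h2]
    exact h1
  -- master inequality 2 (u recursion)
  have master2 : ∀ k, (d (k+1))^2 ≤ (d k)^2 - cc * ((d k)^2) ^ (1 + p) := by
    intro k
    have h1 : cc * ((d k)^2) ^ (1 + p) ≤ c * (δ k) ^ (2 / (ν + 1)) := by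
      have hgr : (ρ * (d k) ^ r) ^ (2 / (ν + 1)) ≤ (δ k) ^ (2 / (ν + 1)) :=
        Real.rpow_le_rpow (mul_nonneg hρ.le (Real.rpow_nonneg (hdnn k) r)) (growth' k) (by positivity)
      have hexp1 : (ρ * (d k) ^ r) ^ (2 / (ν + 1))
          = ρ ^ (2 / (ν + 1)) * (d k) ^ (r * (2 / (ν + 1))) := by
        rw [Real.mul_rpow hρ.le (Real.rpow_nonneg (hdnn k) _), ← Real.rpow_mul (hdnn k)]
      have hexp2 : ((d k)^2) ^ (1 + p) = (d k) ^ (r * (2 / (ν + 1))) := by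
        rw [← Real.rpow_natCast (d k) 2, ← Real.rpow_mul (hdnn k)]
        congr 1
        rw [hp]
        push_cast
        field_simp
        ring
      rw [hexp2, hcc]
      calc c * ρ ^ (2 / (ν + 1)) * (d k) ^ (r * (2 / (ν + 1)))
          = c * (ρ ^ (2 / (ν + 1)) * (d k) ^ (r * (2 / (ν + 1)))) := by ring
        _ = c * ((ρ * (d k) ^ r) ^ (2 / (ν + 1))) := by rw [hexp1]
        _ ≤ c * (δ k) ^ (2 / (ν + 1)) := by
            apply mul_le_mul_of_nonneg_left hgr hcpos.le
    have h2 := master1 k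
    have h3 := udrop k
    linarith
  -- apply sequence lemma
  obtain ⟨m, hm2⟩ := hKeven
  have hmK : K = 2 * m := by omega
  have hm1 : 1 ≤ m := by omega
  have hmpos : (0:ℝ) < m := by exact_mod_cast hm1
  have useq : ((d m)^2) ≤ (p * cc * m) ^ (-1 / p) := by
    apply my_seq hccpos hppos (fun k => sq_nonneg (d k)) master2 m hm1
  set V : ℝ := (p * cc * m) ^ (-1 / p) with hV
  have hVpos : 0 < V := by positivity
  -- telescoping over second half
  have tel : ∀ N, m ≤ N → ∑ k ∈ Finset.Ico m N, c * (δ k) ^ (2 / (ν + 1))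
      ≤ (d m)^2 - (d N)^2 := by
    intro N hN
    induction N, hN using Nat.le_induction with
    | base => simp
    | succ N hmN ih =>
      rw [Finset.sum_Ico_succ_top hmN]
      have h1 := master1 N
      have h2 := udrop N
      have : c * (δ N) ^ (2 / (ν + 1)) ≤ (d N)^2 - (d (N+1))^2 := by linarith
      linarith
  have hsum : ∑ k ∈ Finset.Ico m K, c * (δ k) ^ (2 / (ν + 1)) ≤ V := by
    have h1 := tel K (by omega)
    have h2 : (0:ℝ) ≤ (d K)^2 := sq_nonneg _
    linarith [useq]
  -- extract a good index
  have hcard : (Finset.Ico m K).card = m := by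
    rw [Nat.card_Ico]; omega
  have hne : (Finset.Ico m K).Nonempty := by
    rw [Finset.nonempty_Ico]; omega
  obtain ⟨k₀, hk₀mem, hk₀⟩ : ∃ k₀ ∈ Finset.Ico m K,
      c * (δ k₀) ^ (2 / (ν + 1)) ≤ V / m := by
    apply Finset.exists_le_of_sum_le hne
    rw [Finset.sum_const, hcard]
    rw [nsmul_eq_mul]
    rw [mul_div_cancel₀ _ (ne_of_gt hmpos)]
    exact hsum
  have hk₀1 : 1 ≤ k₀ := by
    have := (Finset.mem_Ico.mp hk₀mem).1; omega
  have hk₀K : k₀ ≤ K := by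
    have := (Finset.mem_Ico.mp hk₀mem).2; omega
  refine ⟨k₀, hk₀1, hk₀K, ?_⟩
  -- δ k₀ ≤ (V/(m*c))^((ν+1)/2)
  have hδk : δ k₀ ≤ (V / (m * c)) ^ ((ν + 1) / 2) := by
    have h1 : (δ k₀) ^ (2 / (ν + 1)) ≤ V / (m * c) := by
      rw [mul_comm] at hk₀
      rw [← div_div]
      exact (le_div_iff₀ hcpos).2 hk₀
    calc δ k₀ = ((δ k₀) ^ (2 / (ν + 1))) ^ ((ν + 1) / 2) := by
          rw [← Real.rpow_mul (hδnn k₀)]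
          rw [show 2 / (ν + 1) * ((ν + 1) / 2) = 1 by field_simp]
          exact (Real.rpow_one _).symm
      _ ≤ (V / (m * c)) ^ ((ν + 1) / 2) := by
          apply Real.rpow_le_rpow (Real.rpow_nonneg (hδnn k₀) _) h1 (by positivity)
  refine hδk.trans (le_of_eq ?_)
  -- final constant identification
  have hKpos : (0:ℝ) < (K:ℝ) := by
    have : (0:ℕ) < K := by omega
    exact_mod_cast this
  have hKR : (K:ℝ) = 2 * m := by exact_mod_cast hmK
  have hmne : (m:ℝ) ≠ 0 := hmpos.ne'
  have hν1r : ν + 1 - r ≠ 0 := by intro h; linarith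
  have hrνne : r - ν - 1 ≠ 0 := hrν.ne'
  have hlogm : Real.log m = Real.log K - Real.log 2 := by
    rw [hKR, Real.log_mul two_ne_zero hmne]; ring
  have hlogM : Real.log M = q * (Real.log (ν+1) - Real.log ν) + 2/(ν+1) * Real.log L := by
    rw [hM, Real.log_mul (ne_of_gt (by positivity)) (ne_of_gt (Real.rpow_pos_of_pos hL _)),
      Real.log_rpow (by positivity), Real.log_rpow hL, Real.log_div hν1ne hνne]
    all_goals ring
  have hlogc : Real.log c = Real.log (γ*(2-γ)) - Real.log M := by
    rw [hc, Real.log_div hγγ.ne' hMpos.ne']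
  have hlogcc : Real.log cc = Real.log c + 2/(ν+1) * Real.log ρ := by
    rw [hcc, Real.log_mul hcpos.ne' (Real.rpow_pos_of_pos hρ _).ne', Real.log_rpow hρ]
  have hlogp : Real.log p = Real.log (r-ν-1) - Real.log (ν+1) := by
    rw [hp, Real.log_div hrνne hν1ne]
  have hlogV : Real.log V = (-1/p) * (Real.log p + Real.log cc + Real.log m) := by
    rw [hV, Real.log_rpow (by positivity), Real.log_mul (by positivity : (0:ℝ) < p * cc).ne' hmne,
      Real.log_mul hppos.ne' hccpos.ne']
    all_goals ring
  have hlhspos : 0 < V / (m * c) := div_pos hVpos (by positivity)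
  have hlpos : 0 < (V / (m * c)) ^ ((ν+1)/2) := Real.rpow_pos_of_pos hlhspos _
  have eC1 := Real.rpow_pos_of_pos hrν ((ν+1)^2/(2*(ν+1-r)))
  have eC2 := Real.rpow_pos_of_pos hγγ (r*(ν+1)/(2*(ν+1-r)))
  have eC3 := Real.rpow_pos_of_pos hν0 (ν*r/(ν+1-r))
  have eC4 := Real.rpow_pos_of_pos (two_pos (α := ℝ)) (r*(ν+1)/(2*(ν+1-r)))
  have eC5 := Real.rpow_pos_of_pos hν1p (((ν+1)^2+2*ν*r)/(2*(ν+1-r)))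
  have eC6 := Real.rpow_pos_of_pos hL (r/(r-ν-1))
  have eC7 := Real.rpow_pos_of_pos hρ ((ν+1)/(r-ν-1))
  have eC8 := Real.rpow_pos_of_pos hKpos (r*(ν+1)/(2*(r-ν-1)))
  have hrpos : 0 < ((r - ν - 1) ^ ((ν + 1) ^ 2 / (2 * (ν + 1 - r))) *
          (γ * (2 - γ)) ^ (r * (ν + 1) / (2 * (ν + 1 - r))) *
          ν ^ (ν * r / (ν + 1 - r)) /
          ((2 : ℝ) ^ (r * (ν + 1) / (2 * (ν + 1 - r))) *
            (ν + 1) ^ (((ν + 1) ^ 2 + 2 * ν * r) / (2 * (ν + 1 - r))))) *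
        (L ^ (r / (r - ν - 1)) /
          (ρ ^ ((ν + 1) / (r - ν - 1)) * (K : ℝ) ^ (r * (ν + 1) / (2 * (r - ν - 1))))) :=
    mul_pos (div_pos (mul_pos (mul_pos eC1 eC2) eC3) (mul_pos eC4 eC5))
      (div_pos eC6 (mul_pos eC7 eC8))
  rw [← Real.exp_log hlpos, ← Real.exp_log hrpos]
  congr 1
  rw [Real.log_rpow hlhspos, Real.log_div hVpos.ne' (by positivity : (0:ℝ) < (m:ℝ) * c).ne',
    Real.log_mul hmne hcpos.ne', hlogV, hlogcc, hlogc, hlogM, hlogp, hlogm,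
    Real.log_mul (div_pos (mul_pos (mul_pos eC1 eC2) eC3) (mul_pos eC4 eC5)).ne'
      (div_pos eC6 (mul_pos eC7 eC8)).ne',
    Real.log_div (mul_pos (mul_pos eC1 eC2) eC3).ne' (mul_pos eC4 eC5).ne',
    Real.log_div eC6.ne' (mul_pos eC7 eC8).ne',
    Real.log_mul (mul_pos eC1 eC2).ne' eC3.ne', Real.log_mul eC1.ne' eC2.ne',
    Real.log_mul eC4.ne' eC5.ne', Real.log_mul eC7.ne' eC8.ne',
    Real.log_rpow hrν, Real.log_rpow hγγ, Real.log_rpow hν0,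
    Real.log_rpow (two_pos (α := ℝ)), Real.log_rpow hν1p, Real.log_rpow hL,
    Real.log_rpow hρ, Real.log_rpow hKpos, hq, hp]
  generalize Real.log ν = a1
  generalize Real.log (ν+1) = a2
  generalize Real.log L = a3
  generalize Real.log ρ = a4
  generalize Real.log (γ*(2-γ)) = a5
  generalize Real.log 2 = a6
  generalize Real.log (K:ℝ) = a7
  generalize Real.log (r-ν-1) = a8
  field_simp
  ring
end
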